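/- Define in ℂ[x,y,z] the two cuspidal cubics F_1 := y³ − z³ + 3x²z + 2x³ and F_2 := y³ − z³ + 3x²z − 2x³, and set f_2 := yz + y² + z² − x² and f_3 := z³ − x²z − 2yx² + 2yz² + 2y²z + y³. Then the two polynomial identities hold: 3·f_3² − 4·f_2³ + F_1·F_2 = 0 and 4·x³ − F_1 + F_2 = 0. In particular the sextic F_1·F_2 supports a quasi-toric relation of elliptic type (2,3,6) and a quasi-toric relation of elliptic type (3,3,3). -/

import Mathlib

open MvPolynomial

section QuasiToric

variable {R : Type*} [CommRing R] (x y z : R)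

-- The paper's `F₁`, `F₂`, `f₂`, `f₃`, in that order.
def cuspidalCubic₁ : R := y ^ 3 - z ^ 3 + 3 * x ^ 2 * z + 2 * x ^ 3

def cuspidalCubic₂ : R := y ^ 3 - z ^ 3 + 3 * x ^ 2 * z - 2 * x ^ 3

def quasiToricConic : R := y * z + y ^ 2 + z ^ 2 - x ^ 2

def quasiToricCubic : R :=
  z ^ 3 - x ^ 2 * z - 2 * y * x ^ 2 + 2 * y * z ^ 2 + 2 * y ^ 2 * z + y ^ 3

theorem quasiToric_two_three_six :
    3 * quasiToricCubic x y z ^ 2 - 4 * quasiToricConic x y z ^ 3 +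
      cuspidalCubic₁ x y z * cuspidalCubic₂ x y z = 0 := by
  unfold quasiToricCubic quasiToricConic cuspidalCubic₁ cuspidalCubic₂
  ring

theorem quasiToric_three_three_three :
    4 * x ^ 3 - cuspidalCubic₁ x y z + cuspidalCubic₂ x y z = 0 := by
  unfold cuspidalCubic₁ cuspidalCubic₂
  ring

end QuasiToric

/-- The sextic `F₁·F₂`, union of the two cuspidal cubics
`F₁ = y³ − z³ + 3x²z + 2x³` and `F₂ = y³ − z³ + 3x²z − 2x³`, supports both a
quasi-toric relation of elliptic type `(2,3,6)`, namely
`3·f₃² − 4·f₂³ + F₁·F₂ = 0`, and one of elliptic type `(3,3,3)`, namely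
`4·x³ − F₁ + F₂ = 0` (here `x = X 0`, `y = X 1`, `z = X 2`). -/
theorem stmt_10 :
    (3 * ((X 2) ^ 3 - (X 0) ^ 2 * X 2 - 2 * X 1 * (X 0) ^ 2 + 2 * X 1 * (X 2) ^ 2 +
          2 * (X 1) ^ 2 * X 2 + (X 1) ^ 3) ^ 2 -
        4 * (X 1 * X 2 + (X 1) ^ 2 + (X 2) ^ 2 - (X 0) ^ 2) ^ 3 +
        ((X 1) ^ 3 - (X 2) ^ 3 + 3 * (X 0) ^ 2 * X 2 + 2 * (X 0) ^ 3) *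
          ((X 1) ^ 3 - (X 2) ^ 3 + 3 * (X 0) ^ 2 * X 2 - 2 * (X 0) ^ 3) =
      (0 : MvPolynomial (Fin 3) ℂ)) ∧
    (4 * (X 0) ^ 3 -
        ((X 1) ^ 3 - (X 2) ^ 3 + 3 * (X 0) ^ 2 * X 2 + 2 * (X 0) ^ 3) +
        ((X 1) ^ 3 - (X 2) ^ 3 + 3 * (X 0) ^ 2 * X 2 - 2 * (X 0) ^ 3) =
      (0 : MvPolynomial (Fin 3) ℂ)) :=
  ⟨quasiToric_two_three_six (X 0) (X 1) (X 2), quasiToric_three_three_three (X 0) (X 1) (X 2)⟩
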